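/- arXiv:math/0509266 — 4 statements merged into one kernel-verified Lean document; each statement's English description precedes it below -/
import Mathlib

section
/- Let A be a C*-algebra, X a positive element of A, and Z a positive element of the center of A such that X² = X·Z. Then X ≤ Z. -/
/-- If `X` is a positive element of a C*-algebra and `Z` is a positive central element
such that `X² = X·Z`, then `X ≤ Z`. -/
theorem stmt1 {A : Type*} [CStarAlgebra A] [PartialOrder A] [StarOrderedRing A]
    (X Z : A) (hX : 0 ≤ X) (hZ : 0 ≤ Z) (hZc : ∀ y : A, Z * y = y * Z)
    (h : X ^ 2 = X * Z) : X ≤ Z := by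
  set Y : A := Z - X with hYdef
  have hXsa : IsSelfAdjoint X := .of_nonneg hX
  have hYsa : IsSelfAdjoint Y := (IsSelfAdjoint.of_nonneg hZ).sub hXsa
  set N : A := Y⁻ with hNdef
  have hNnn : 0 ≤ N := CFC.negPart_nonneg Y
  have hNsa : IsSelfAdjoint N := .of_nonneg hNnn
  have hXY : X * Y = 0 := by rw [hYdef, mul_sub, ← h, sq, sub_self]
  have hYN : Y * N = -(N * N) := by
    conv_lhs => rw [← CFC.posPart_sub_negPart Y hYsa]
    rw [sub_mul, CFC.posPart_mul_negPart, zero_sub]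
  have hXNN : X * (N * N) = 0 := by
    rw [← neg_eq_zero, ← mul_neg, ← hYN, ← mul_assoc, hXY, zero_mul]
  have hXN : X * N = 0 := by
    have hnorm : ‖X * N‖ * ‖X * N‖ = 0 := by
      rw [← CStarRing.norm_self_mul_star (x := X * N)]
      have : (X * N) * star (X * N) = 0 := by
        rw [star_mul, hNsa.star_eq, hXsa.star_eq]
        calc (X * N) * (N * X) = (X * (N * N)) * X := by noncomm_ring
        _ = 0 := by rw [hXNN, zero_mul]
      rw [this, norm_zero]
    simpa using mul_self_eq_zero.mp hnorm
  have hNX : N * X = 0 := by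
    have := congrArg star hXN
    rwa [star_mul, hNsa.star_eq, hXsa.star_eq, star_zero] at this
  have hN3le : N * (N * N) ≤ 0 := by
    have h1 : N * (Y * N) = -(N * (N * N)) := by rw [hYN, mul_neg]
    have h2 : N * (Y * N) = N * (Z * N) := by
      rw [hYdef, sub_mul, mul_sub, hXN, mul_zero, sub_zero]
    have h3 : 0 ≤ N * (Z * N) := by
      have := star_left_conjugate_nonneg hZ N
      rwa [hNsa.star_eq, mul_assoc] at this
    rw [h2] at h1
    rw [← neg_nonneg, ← h1]
    exact h3
  have hN3ge : 0 ≤ N * (N * N) := by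
    have := CStarAlgebra.pow_nonneg hNnn 3
    rwa [pow_succ, pow_two, mul_assoc] at this
  have hN3 : N * (N * N) = 0 := le_antisymm hN3le hN3ge
  have hNN : N * N = 0 := by
    have hnorm : ‖N * N‖ * ‖N * N‖ = 0 := by
      rw [← CStarRing.norm_self_mul_star (x := N * N)]
      have : (N * N) * star (N * N) = 0 := by
        rw [star_mul, hNsa.star_eq]
        calc (N * N) * (N * N) = N * (N * (N * N)) := by noncomm_ring
        _ = 0 := by rw [hN3, mul_zero]
      rw [this, norm_zero]
    simpa using mul_self_eq_zero.mp hnorm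
  have hN : N = 0 := by
    have hnorm : ‖N‖ * ‖N‖ = 0 := by
      rw [← CStarRing.norm_self_mul_star (x := N), hNsa.star_eq, hNN, norm_zero]
    simpa using mul_self_eq_zero.mp hnorm
  have : 0 ≤ Y := (CFC.negPart_eq_zero_iff Y hYsa).mp hN
  rwa [hYdef, sub_nonneg] at this
end

section
/- Let C be a monoidal category and (λ, V, V′, W, W′) a Frobenius algebra in C. Define e := V ≫ W : 𝟙 ⟶ λ ⊗ λ and d := W′ ≫ V′ : λ ⊗ λ ⟶ 𝟙. Then e and d satisfy both zigzag (duality) identities, i.e. (up to associators and unitors) (d ⊗ 1_λ)∘(1_λ ⊗ e) = 1_λ and (1_λ ⊗ d)∘(e ⊗ 1_λ) = 1_λ. Hence (e, d) is an exact pairing of λ with itself: the object λ of a Frobenius algebra is self-dual (self-conjugate). -/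
open CategoryTheory MonoidalCategory

/-- The object of a Frobenius algebra `(X, V, V', W, W')` in a monoidal category is
self-dual: `e := V ≫ W` and `d := W' ≫ V'` satisfy both zigzag (duality) identities,
i.e. they form an exact pairing of `X` with itself. -/
theorem stmt4 {C : Type*} [Category C] [MonoidalCategory C]
    (X : C) (V : 𝟙_ C ⟶ X) (V' : X ⟶ 𝟙_ C) (W : X ⟶ X ⊗ X) (W' : X ⊗ X ⟶ X)
    (coassoc : W ≫ W ▷ X ≫ (α_ X X X).hom = W ≫ X ◁ W)
    (assoc' : W' ▷ X ≫ W' = (α_ X X X).hom ≫ X ◁ W' ≫ W')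
    (counit_l : W ≫ V' ▷ X ≫ (λ_ X).hom = 𝟙 X)
    (counit_r : W ≫ X ◁ V' ≫ (ρ_ X).hom = 𝟙 X)
    (unit_l : (λ_ X).inv ≫ V ▷ X ≫ W' = 𝟙 X)
    (unit_r : (ρ_ X).inv ≫ X ◁ V ≫ W' = 𝟙 X)
    (frob_l : X ◁ W ≫ (α_ X X X).inv ≫ W' ▷ X = W' ≫ W)
    (frob_r : W ▷ X ≫ (α_ X X X).hom ≫ X ◁ W' = W' ≫ W) :
    X ◁ (V ≫ W) ≫ (α_ X X X).inv ≫ (W' ≫ V') ▷ X = (ρ_ X).hom ≫ (λ_ X).inv ∧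
    (V ≫ W) ▷ X ≫ (α_ X X X).hom ≫ X ◁ (W' ≫ V') = (λ_ X).hom ≫ (ρ_ X).inv := by
  have h1 : X ◁ V ≫ W' = (ρ_ X).hom := by
    rw [← cancel_epi (ρ_ X).inv, ← Category.assoc, Category.assoc, unit_r]
    simp
  have h2 : V ▷ X ≫ W' = (λ_ X).hom := by
    rw [← cancel_epi (λ_ X).inv, ← Category.assoc, Category.assoc, unit_l]
    simp
  have h3 : W ≫ V' ▷ X = (λ_ X).inv := by
    rw [← cancel_mono (λ_ X).hom, Category.assoc, counit_l]
    simp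
  have h4 : W ≫ X ◁ V' = (ρ_ X).inv := by
    rw [← cancel_mono (ρ_ X).hom, Category.assoc, counit_r]
    simp
  constructor
  · rw [MonoidalCategory.whiskerLeft_comp, MonoidalCategory.comp_whiskerRight]
    slice_lhs 2 4 => rw [frob_l]
    slice_lhs 1 2 => rw [h1]
    slice_lhs 2 3 => rw [h3]
  · rw [MonoidalCategory.comp_whiskerRight, MonoidalCategory.whiskerLeft_comp]
    slice_lhs 2 4 => rw [frob_r]
    slice_lhs 1 2 => rw [h2]
    slice_lhs 2 3 => rw [h4]
end

section
/- Let C be a monoidal category, λ an object of C, and S : λ ⟶ λ⊗λ, S′ : λ⊗λ ⟶ λ morphisms such that (up to associators): S′∘S = 1_λ, and the Frobenius relation (S′⊗1_λ)∘(1_λ⊗S) = S∘S′ = (1_λ⊗S′)∘(S⊗1_λ) holds. Then S is coassociative: (S⊗1_λ)∘S = (1_λ⊗S)∘S (as morphisms λ ⟶ λ⊗(λ⊗λ), after composing the left-hand side with the associator). -/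
open CategoryTheory MonoidalCategory

/-- If `S : X ⟶ X ⊗ X` and `S' : X ⊗ X ⟶ X` satisfy `S' ∘ S = 1` and the Frobenius
relation `(S'⊗1)∘(1⊗S) = S∘S' = (1⊗S')∘(S⊗1)`, then `S` is coassociative. -/
theorem stmt6 {C : Type*} [Category C] [MonoidalCategory C]
    (X : C) (S : X ⟶ X ⊗ X) (S' : X ⊗ X ⟶ X)
    (hiso : S ≫ S' = 𝟙 X)
    (frob_l : X ◁ S ≫ (α_ X X X).inv ≫ S' ▷ X = S' ≫ S)
    (frob_r : S ▷ X ≫ (α_ X X X).hom ≫ X ◁ S' = S' ≫ S) :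
    S ≫ S ▷ X ≫ (α_ X X X).hom = S ≫ X ◁ S := by
  have hSS : S ≫ S' ≫ S = S := by rw [← Category.assoc, hiso, Category.id_comp]
  have pent : (α_ X X (X ⊗ X)).hom ≫ X ◁ (α_ X X X).inv =
      (α_ (X ⊗ X) X X).inv ≫ (α_ X X X).hom ▷ X ≫ (α_ X (X ⊗ X) X).hom := by
    coherence
  symm
  calc S ≫ X ◁ S
      = S ≫ (S' ≫ S) ≫ X ◁ S := by
        conv_rhs => rw [← Category.assoc, hSS]
    _ = S ≫ S ▷ X ≫ (α_ X X X).hom ≫ X ◁ (S' ≫ S) := by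
        conv_lhs => rw [← frob_r]
        simp only [Category.assoc, MonoidalCategory.whiskerLeft_comp]
    _ = S ≫ S ▷ X ≫ (α_ X X X).hom ≫
          X ◁ (X ◁ S ≫ (α_ X X X).inv ≫ S' ▷ X) := by rw [frob_l]
    _ = S ≫ S ▷ X ≫ (α_ X X X).hom ≫ X ◁ (X ◁ S) ≫ X ◁ (α_ X X X).inv ≫
          X ◁ (S' ▷ X) := by
        simp only [Category.assoc, MonoidalCategory.whiskerLeft_comp]
    _ = S ≫ S ▷ X ≫ (X ⊗ X) ◁ S ≫ (α_ X X (X ⊗ X)).hom ≫ X ◁ (α_ X X X).inv ≫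
          X ◁ (S' ▷ X) := by
        rw [← associator_naturality_right_assoc]
    _ = S ≫ X ◁ S ≫ S ▷ (X ⊗ X) ≫ (α_ X X (X ⊗ X)).hom ≫ X ◁ (α_ X X X).inv ≫
          X ◁ (S' ▷ X) := by
        rw [← whisker_exchange_assoc]
    _ = S ≫ X ◁ S ≫ S ▷ (X ⊗ X) ≫ (α_ (X ⊗ X) X X).inv ≫ (α_ X X X).hom ▷ X ≫
          (α_ X (X ⊗ X) X).hom ≫ X ◁ (S' ▷ X) := by
        rw [reassoc_of% pent]
    _ = S ≫ X ◁ S ≫ (α_ X X X).inv ≫ (S ▷ X) ▷ X ≫ (α_ X X X).hom ▷ X ≫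
          (X ◁ S') ▷ X ≫ (α_ X X X).hom := by
        rw [associator_inv_naturality_left_assoc, associator_naturality_middle]
    _ = S ≫ X ◁ S ≫ (α_ X X X).inv ≫ (S ▷ X ≫ (α_ X X X).hom ≫ X ◁ S') ▷ X ≫
          (α_ X X X).hom := by
        simp only [comp_whiskerRight, Category.assoc]
    _ = S ≫ X ◁ S ≫ (α_ X X X).inv ≫ S' ▷ X ≫ S ▷ X ≫ (α_ X X X).hom := by
        rw [frob_r]
        simp only [comp_whiskerRight, Category.assoc]
    _ = S ≫ (S' ≫ S) ≫ S ▷ X ≫ (α_ X X X).hom := by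
        rw [← frob_l]
        simp only [Category.assoc]
    _ = S ≫ S ▷ X ≫ (α_ X X X).hom := by
        conv_lhs => rw [← Category.assoc, hSS]
end

section
/- Let Ω be a compact Hausdorff topological space, E a normed vector space over ℂ, and Γ a set of continuous functions Ω → E that is closed under finite sums and under pointwise multiplication by continuous functions Ω → ℝ, and is closed in the uniform (sup-norm) topology. Let g : Ω → E be any function such that for every ω ∈ Ω and every ε > 0 there exist S ∈ Γ and an open neighborhood U of ω with ‖g(ω′) − S(ω′)‖ ≤ ε for all ω′ ∈ U. Then g belongs to Γ (in particular g is continuous). -/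
/-!
Fix `ε > 0`. By compactness finitely many of the neighbourhoods `U` on which some `S ∈ Γ` is
`ε`-close to `g` cover `Ω`; a partition of unity `(φᵢ)` subordinate to them glues the local
approximants into `∑ φᵢ • Sᵢ ∈ Γ`. At each point this is a convex combination of values lying in
the closed ball of radius `ε` about `g ω`, so it is a global `ε`-approximant, and closedness of
`Γ` gives `g ∈ Γ`.
-/

open Set

theorem PartitionOfUnity.exists_finset_isSubordinate {X ι : Type*} [TopologicalSpace X]
    [CompactSpace X] [NormalSpace X] (U : ι → Set X) (hU : ∀ i, IsOpen (U i))
    (hcover : ⋃ i, U i = univ) :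
    ∃ t : Finset ι, ∃ f : PartitionOfUnity t X, f.IsSubordinate fun i => U i := by
  obtain ⟨t, ht⟩ := isCompact_univ.elim_finite_subcover U hU hcover.ge
  exact ⟨t, PartitionOfUnity.exists_isSubordinate isClosed_univ _ (fun i => hU i)
    (by rwa [iUnion_subtype])⟩

theorem PartitionOfUnity.norm_sub_sum_smul_le {X ι E : Type*} [TopologicalSpace X] [Fintype ι]
    [NormedAddCommGroup E] [NormedSpace ℝ E] (f : PartitionOfUnity ι X) {U : ι → Set X}
    (hf : f.IsSubordinate U) {g : X → E} {S : ι → X → E} {ε : ℝ}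
    (hS : ∀ i, ∀ x ∈ U i, ‖g x - S i x‖ ≤ ε) (x : X) :
    ‖g x - ∑ i, f i x • S i x‖ ≤ ε := by
  have hball : ∑ᶠ i, f i x • S i x ∈ Metric.closedBall (g x) ε :=
    f.finsum_smul_mem_convex (mem_univ x)
      (fun i hi => by
        rw [Metric.mem_closedBall, dist_comm, dist_eq_norm]
        exact hS i x (hf i (subset_tsupport _ hi)))
      (convex_closedBall _ _)
  rwa [finsum_eq_sum_of_fintype, Metric.mem_closedBall, dist_comm, dist_eq_norm] at hball

theorem stmt9_general {Ω : Type*} [TopologicalSpace Ω] [CompactSpace Ω] [T2Space Ω]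
    {E : Type*} [NormedAddCommGroup E] [NormedSpace ℂ E]
    (Γ : Set (Ω → E))
    (hzero : (0 : Ω → E) ∈ Γ)
    (hadd : ∀ f ∈ Γ, ∀ g ∈ Γ, f + g ∈ Γ)
    (hsmul : ∀ c : Ω → ℝ, Continuous c → ∀ f ∈ Γ, (fun ω => c ω • f ω) ∈ Γ)
    (hclosed : ∀ g : Ω → E, (∀ ε : ℝ, 0 < ε → ∃ S ∈ Γ, ∀ ω, ‖g ω - S ω‖ ≤ ε) → g ∈ Γ)
    (g : Ω → E)
    (hg : ∀ ω : Ω, ∀ ε : ℝ, 0 < ε → ∃ S ∈ Γ, ∃ U : Set Ω, IsOpen U ∧ ω ∈ U ∧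
      ∀ ω' ∈ U, ‖g ω' - S ω'‖ ≤ ε) :
    g ∈ Γ := by
  let Γ' : AddSubmonoid (Ω → E) := ⟨⟨Γ, fun {f g} hf hg => hadd f hf g hg⟩, hzero⟩
  refine hclosed g fun ε hε => ?_
  choose S hS U hU hmem hgS using fun ω => hg ω ε hε
  obtain ⟨t, f, hf⟩ := PartitionOfUnity.exists_finset_isSubordinate U hU
    (iUnion_eq_univ_iff.2 fun ω => ⟨ω, hmem ω⟩)
  refine ⟨∑ i : t, fun ω => f i ω • S i ω, ?_, fun ω => ?_⟩
  · exact Γ'.sum_mem (t := Finset.univ) fun i _ => hsmul _ (f i).continuous _ (hS i)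
  · simpa only [Finset.sum_apply] using f.norm_sub_sum_smul_le hf (fun i => hgS i) ω

/-- Let `Ω` be a compact Hausdorff space, `E` a normed complex vector space, and `Γ` a
set of continuous functions `Ω → E` closed under finite sums, under pointwise
multiplication by continuous real-valued functions, and closed in the uniform
topology. If `g : Ω → E` can, near every point and for every `ε > 0`, be
`ε`-approximated on a neighbourhood by an element of `Γ`, then `g ∈ Γ`. -/
theorem stmt9 {Ω : Type*} [TopologicalSpace Ω] [CompactSpace Ω] [T2Space Ω]
    {E : Type*} [NormedAddCommGroup E] [NormedSpace ℂ E]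
    (Γ : Set (Ω → E))
    (hcont : ∀ f ∈ Γ, Continuous f)
    (hzero : (0 : Ω → E) ∈ Γ)
    (hadd : ∀ f ∈ Γ, ∀ g ∈ Γ, f + g ∈ Γ)
    (hsmul : ∀ c : Ω → ℝ, Continuous c → ∀ f ∈ Γ, (fun ω => c ω • f ω) ∈ Γ)
    (hclosed : ∀ g : Ω → E, (∀ ε : ℝ, 0 < ε → ∃ S ∈ Γ, ∀ ω, ‖g ω - S ω‖ ≤ ε) → g ∈ Γ)
    (g : Ω → E)
    (hg : ∀ ω : Ω, ∀ ε : ℝ, 0 < ε → ∃ S ∈ Γ, ∃ U : Set Ω, IsOpen U ∧ ω ∈ U ∧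
      ∀ ω' ∈ U, ‖g ω' - S ω'‖ ≤ ε) :
    g ∈ Γ :=
  stmt9_general Γ hzero hadd hsmul hclosed g hg
end
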